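/- Networks 1 and 2 imply that (T_i)_{i∈C_1} are mutually independent and (T_i)_{i∈C_2} are mutually independent; that is, for every joint distribution of the variables U_i, Y_i, Z_i, X_i^j satisfying both Network 1 and Network 2, the minimal sufficient statistics T_i with indices in C_1 are mutually independent, and likewise for C_2. -/

import Mathlib

namespace Paper

/-- The probability of an event under a probability mass function. -/
noncomputable def pr {Ω : Type} (μ : PMF Ω) (E : Set Ω) : ENNReal :=
  μ.toOuterMeasure E

/-- Conditional independence `X ⊥⊥ Y | Z`:
`p(x,y,z) p(z) = p(x,z) p(y,z)` for all `x, y, z`. -/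
def CondIndep {Ω α β γ : Type} (μ : PMF Ω) (X : Ω → α) (Y : Ω → β) (Z : Ω → γ) : Prop :=
  ∀ (x : α) (y : β) (z : γ),
    pr μ {ω | X ω = x ∧ Y ω = y ∧ Z ω = z} * pr μ {ω | Z ω = z}
      = pr μ {ω | X ω = x ∧ Z ω = z} * pr μ {ω | Y ω = y ∧ Z ω = z}

/-- Unconditional independence `X ⊥⊥ Y`. -/
def Indep {Ω α β : Type} (μ : PMF Ω) (X : Ω → α) (Y : Ω → β) : Prop :=
  ∀ (x : α) (y : β),
    pr μ {ω | X ω = x ∧ Y ω = y} = pr μ {ω | X ω = x} * pr μ {ω | Y ω = y}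

/-- `X ≥ι Y`: `X` functionally determines `Y` (with probability one). -/
def FunDep {Ω α β : Type} (μ : PMF Ω) (X : Ω → α) (Y : Ω → β) : Prop :=
  ∃ f : α → β, ∀ ω ∈ μ.support, Y ω = f (X ω)

/-- `X =ι Y`: informational equivalence. -/
def InfoEq {Ω α β : Type} (μ : PMF Ω) (X : Ω → α) (Y : Ω → β) : Prop :=
  FunDep μ X Y ∧ FunDep μ Y X

/-- The random variable `X` has finite support. -/
def FinSupp {Ω α : Type} (μ : PMF Ω) (X : Ω → α) : Prop :=
  (X '' μ.support).Finite

/-- The random variable `X` has support of cardinality at most `ℓ`. -/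
def CardLE {Ω α : Type} (μ : PMF Ω) (X : Ω → α) (ℓ : ℕ) : Prop :=
  ∃ s : Finset α, s.card ≤ ℓ ∧ ∀ ω ∈ μ.support, X ω ∈ s

/-- `X` is uniformly distributed with support of cardinality `ℓ`. -/
def UniformCard {Ω α : Type} (μ : PMF Ω) (X : Ω → α) (ℓ : ℕ) : Prop :=
  ∃ S : Finset α, S.card = ℓ ∧ (∀ x ∈ S, pr μ {ω | X ω = x} = (ℓ : ENNReal)⁻¹) ∧
    ∀ x, x ∉ S → pr μ {ω | X ω = x} = 0

/-- The probability mass function of the random variable `X`. -/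
noncomputable def distOf {Ω α : Type} (μ : PMF Ω) (X : Ω → α) : α → ENNReal :=
  fun x => pr μ {ω | X ω = x}

/-- `p ⪰ q` : `p` majorizes `q`, i.e. for every `k`, the sum of the `k` largest values
of `p` is at least the sum of the `k` largest values of `q`. -/
def Majorizes (p q : ℕ → ENNReal) : Prop :=
  ∀ s : Finset ℕ, ∃ t : Finset ℕ, t.card ≤ s.card ∧ ∑ x ∈ s, q x ≤ ∑ x ∈ t, p x

/-- `T` is a sufficient statistic of `X` for `U`: `X ≥ι T` and `U ⊥⊥ X | T`. -/
def SuffStat {Ω α β γ : Type} (μ : PMF Ω) (X : Ω → α) (U : Ω → β) (T : Ω → γ) : Prop :=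
  FunDep μ X T ∧ CondIndep μ U X T

/-- `T` is a minimal sufficient statistic of `X` for `U`. -/
def MinSuffStat {Ω α β γ : Type} (μ : PMF Ω) (X : Ω → α) (U : Ω → β) (T : Ω → γ) : Prop :=
  SuffStat μ X U T ∧
    ∀ (δ : Type) (T' : Ω → δ), SuffStat μ X U T' → FunDep μ T' T

/-- Mutual independence of the subfamily `(V i)_{i ∈ s}`: each `V i` (for `i ∈ s`) is
independent of the joint variable of the others. -/
def MutIndepOn {Ω ι : Type} {β : ι → Type} (μ : PMF Ω) (V : ∀ i, Ω → β i)
    (s : Finset ι) : Prop :=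
  ∀ i ∈ s, Indep μ (V i) (fun ω => fun j : {j // j ∈ s ∧ j ≠ i} => V j.1 ω)

/-- Mutual independence of the whole family `(V i)_i`. -/
def MutIndep {Ω ι : Type} {β : ι → Type} (μ : PMF Ω) (V : ∀ i, Ω → β i) : Prop :=
  ∀ i, Indep μ (V i) (fun ω => fun j : {j // j ≠ i} => V j.1 ω)

/-- Mutual independence of `(V i)_{i ∈ C}` for a list `C` of indices. -/
def MutIndepL {Ω : Type} (μ : PMF Ω) (V : ℕ → Ω → ℕ) (C : List ℕ) : Prop :=
  ∀ i ∈ C, Indep μ (V i) (fun ω => fun j : {j // j ∈ C ∧ j ≠ i} => V j.1 ω)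

/-- The joint random variable `(X a)_{a ∈ A}` for a list `A` of indices. -/
def jointOn {Ω : Type} (X : ℕ → Ω → ℕ) (A : List ℕ) : Ω → ({a : ℕ // a ∈ A} → ℕ) :=
  fun ω a => X a.1 ω

/-- The joint random variable `(T i)_{i ∈ S}` for a finset `S` of indices. -/
def jointFin {Ω ι : Type} {β : ι → Type} (T : ∀ i, Ω → β i) (S : Finset ι) :
    Ω → ((i : {i // i ∈ S}) → β i.1) :=
  fun ω i => T i.1 ω

/-- The set of parents (in-neighbours) of `w` in the directed graph with edge relation `E`. -/
def parentSet {ν : Type} (E : ν → ν → Prop) (w : ν) : Set ν := {v | E v w}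

/-- The set of nodes that are neither descendants nor parents of `w`. -/
def nonDescSet {ν : Type} (E : ν → ν → Prop) (w : ν) : Set ν :=
  {v | ¬ Relation.ReflTransGen E w v ∧ ¬ E v w}

/-- The collection of random variables `(X v)_v` satisfies the Bayesian network structure
with edge relation `E`: each variable is conditionally independent of its
non-descendant non-parent variables given its parent variables. -/
def SatisfiesBN {Ω ν : Type} {β : ν → Type} (μ : PMF Ω) (X : ∀ v, Ω → β v)
    (E : ν → ν → Prop) : Prop :=
  ∀ w : ν, CondIndep μ (X w)
    (fun ω => fun v : nonDescSet E w => X v.1 ω)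
    (fun ω => fun v : parentSet E w => X v.1 ω)

/-- `E` is (the edge list of) a directed acyclic graph on the nodes `{0, …, n-1}`. -/
def IsDAG (n : ℕ) (E : List (ℕ × ℕ)) : Prop :=
  (∀ e ∈ E, e.1 < n ∧ e.2 < n) ∧
    ∀ i : ℕ, ¬ Relation.TransGen (fun a c => (a, c) ∈ E) i i

/-- The edge relation on `Fin n` determined by an edge list. -/
def edgeRelOn (n : ℕ) (E : List (ℕ × ℕ)) : Fin n → Fin n → Prop :=
  fun i j => ((i : ℕ), (j : ℕ)) ∈ E

/-- `(X_0, …, X_{n-1})` satisfies the Bayesian network given by the edge list `E`. -/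
def SatisfiesBNn {Ω : Type} (μ : PMF Ω) (n : ℕ) (X : ℕ → Ω → ℕ)
    (E : List (ℕ × ℕ)) : Prop :=
  SatisfiesBN μ (fun i : Fin n => X (i : ℕ)) (edgeRelOn n E)

/-- `(A, C, B) ∈ I(G_1, …, G_m)`: every collection of finitely supported discrete random
variables satisfying all the network structures in `Gs` satisfies `X_A ⊥⊥ X_B | X_C`. -/
def ImpliedCI (n : ℕ) (Gs : List (List (ℕ × ℕ))) (A C B : List ℕ) : Prop :=
  ∀ (Ω : Type) (μ : PMF Ω) (X : ℕ → Ω → ℕ),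
    (∀ i, i < n → FinSupp μ (X i)) →
    (∀ G ∈ Gs, SatisfiesBNn μ n X G) →
    CondIndep μ (jointOn X A) (jointOn X B) (jointOn X C)

/-- Two lists are disjoint as sets. -/
def DisjointL (A B : List ℕ) : Prop := ∀ a ∈ A, a ∉ B

end Paper
namespace Paper

/-- The nodes of the two networks: `u i = U_i`, `y i = Y_i`, `z i = Z_i`,
`x i j = X_i^j`. -/
inductive BNode (n k : ℕ) : Type
  | u : Fin n → BNode n k
  | y : Fin n → BNode n k
  | z : Fin n → BNode n k
  | x : Fin n → Fin k → BNode n k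

/-- Edge relation of Network 1: `U_i → U_{i'}` for `i ∈ C1, i' ∉ C1` and for
`i, i' ∉ C1` with `i < i'`; and `U_i → Y_i → X_i^1 → ⋯ → X_i^k → Z_i`. -/
def edge1 (n k : ℕ) (C1 : Finset (Fin n)) : BNode n k → BNode n k → Prop :=
  fun v w => match v, w with
  | .u i, .u i' => (i ∈ C1 ∧ i' ∉ C1) ∨ (i ∉ C1 ∧ i' ∉ C1 ∧ i < i')
  | .u i, .y i' => i = i'
  | .y i, .x i' j => i = i' ∧ (j : ℕ) = 0
  | .x i j, .x i' j' => i = i' ∧ (j' : ℕ) = (j : ℕ) + 1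
  | .x i j, .z i' => i = i' ∧ (j : ℕ) = k - 1
  | _, _ => False

/-- Edge relation of Network 2: `U_i → U_{i'}` for `i ∈ C2, i' ∉ C2` and for
`i, i' ∉ C2` with `i < i'`; `U_i → Z_i → Y_i`; `U_i → X_i^j` for `i ≠ b j`; and
`X_i^j → X_{b_j}^j` for `i ∈ A j`. -/
def edge2 (n k : ℕ) (C2 : Finset (Fin n)) (A : Fin k → Finset (Fin n))
    (b : Fin k → Fin n) : BNode n k → BNode n k → Prop :=
  fun v w => match v, w with
  | .u i, .u i' => (i ∈ C2 ∧ i' ∉ C2) ∨ (i ∉ C2 ∧ i' ∉ C2 ∧ i < i')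
  | .u i, .z i' => i = i'
  | .z i, .y i' => i = i'
  | .u i, .x i' j => i = i' ∧ i' ≠ b j
  | .x i j, .x i' j' => j = j' ∧ i' = b j ∧ i ∈ A j
  | _, _ => False

/-- The joint random variable `U = (U_1, …, U_n)`. -/
def Ujoint {Ω : Type} {n k : ℕ} (X : BNode n k → Ω → ℕ) : Ω → (Fin n → ℕ) :=
  fun ω i => X (.u i) ω

/-- The joint random variable `((X_i^j)_{j=1}^k, Y_i, Z_i)`. -/
def tupleVar {Ω : Type} {n k : ℕ} (X : BNode n k → Ω → ℕ) (i : Fin n) :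
    Ω → ((Fin k → ℕ) × ℕ × ℕ) :=
  fun ω => (fun j => X (.x i j) ω, X (.y i) ω, X (.z i) ω)

end Paper
namespace Paper

/-!
In Network 1 the nodes `Y_i, X_i^1, …, X_i^k, Z_i` form a Markov chain each step of which
depends on `U` only through the previous node, so `U` depends on `(X_i, Y_i, Z_i)` only through
`Y_i`: `Y_i` is a sufficient statistic, and the minimal one `T_i` is a function of `Y_i`.
It therefore suffices that the `Y_i` are mutually independent over `C1` and over `C2`.
For `i ∈ C1` (resp. `C2`), `U_i` is a root of Network 1 (resp. 2) none of whose descendants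
is a `Y_j` with `j ≠ i` in the same set, and `Y_i` hangs below `U_i` by the path `U_i → Y_i`
(resp. `U_i → Z_i → Y_i`), each node of which is independent of those `Y_j` given its parent.
-/

open Relation

section Probability

variable {Ω α β γ δ : Type} {μ : PMF Ω}

theorem pr_congr {P Q : Ω → Prop} (h : ∀ ω, P ω ↔ Q ω) :
    pr μ {ω | P ω} = pr μ {ω | Q ω} := by
  simp only [h]

theorem pr_congr_ae {P Q : Ω → Prop} (h : ∀ ω ∈ μ.support, P ω ↔ Q ω) :
    pr μ {ω | P ω} = pr μ {ω | Q ω} :=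
  μ.toOuterMeasure_apply_eq_of_inter_support_eq <| Set.ext fun ω =>
    ⟨fun hω => ⟨(h ω hω.2).1 hω.1, hω.2⟩, fun hω => ⟨(h ω hω.2).2 hω.1, hω.2⟩⟩

theorem pr_ne_top (P : Ω → Prop) : pr μ {ω | P ω} ≠ ⊤ := by
  rw [pr, PMF.toOuterMeasure_apply]
  exact μ.tsum_coe_indicator_ne_top _

theorem pr_eq_zero_of_imp {P Q : Ω → Prop} (hQ : pr μ {ω | Q ω} = 0) (h : ∀ ω, P ω → Q ω) :
    pr μ {ω | P ω} = 0 :=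
  MeasureTheory.measure_mono_null h hQ

theorem pr_univ : pr μ Set.univ = 1 :=
  μ.toOuterMeasure_apply_eq_one_iff _ |>.2 (Set.subset_univ _)

theorem tsum_pr_and_eq (W : Ω → γ) (P : Ω → Prop) :
    ∑' w, pr μ {ω | W ω = w ∧ P ω} = pr μ {ω | P ω} := by
  classical
  simp only [pr, PMF.toOuterMeasure_apply]
  rw [ENNReal.tsum_comm]
  refine tsum_congr fun ω => ?_
  rw [tsum_eq_single (W ω) fun w hw => by simp [Set.indicator, Ne.symm hw]]
  simp [Set.indicator]

open scoped Classical in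
theorem pr_comp_eq_and (A : Ω → α) (f : α → β) (b : β) (Q : Ω → Prop) :
    pr μ {ω | f (A ω) = b ∧ Q ω} = ∑' a, if f a = b then pr μ {ω | A ω = a ∧ Q ω} else 0 := by
  rw [← tsum_pr_and_eq A]
  refine tsum_congr fun a => ?_
  split_ifs with ha
  · exact pr_congr fun ω => ⟨fun h => ⟨h.1, h.2.2⟩, fun h => ⟨h.1, h.1 ▸ ha, h.2⟩⟩
  · have key : ∀ ω, ¬(A ω = a ∧ f (A ω) = b ∧ Q ω) := fun ω h => ha (h.1 ▸ h.2.1)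
    simp [key, pr]

theorem CondIndep.symm {A : Ω → α} {B : Ω → β} {C : Ω → γ} (h : CondIndep μ A B C) :
    CondIndep μ B A C := by
  intro b a c
  rw [pr_congr fun ω => and_left_comm, h a b c, mul_comm]

theorem CondIndep.comp_left {A : Ω → α} {B : Ω → β} {C : Ω → γ} (h : CondIndep μ A B C)
    (f : α → δ) : CondIndep μ (fun ω => f (A ω)) B C := by
  intro d b c
  rw [pr_comp_eq_and, pr_comp_eq_and, ← ENNReal.tsum_mul_right, ← ENNReal.tsum_mul_right]
  refine tsum_congr fun a => ?_
  split_ifs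
  exacts [h a b c, by simp]

theorem CondIndep.comp_right {A : Ω → α} {B : Ω → β} {C : Ω → γ} (h : CondIndep μ A B C)
    (f : β → δ) : CondIndep μ A (fun ω => f (B ω)) C :=
  (h.symm.comp_left f).symm

theorem CondIndep.congr_cond {A : Ω → α} {B : Ω → β} {C : Ω → γ} {C' : Ω → δ}
    (h : CondIndep μ A B C) (f : γ → δ) (g : δ → γ) (hf : ∀ ω, C' ω = f (C ω))
    (hg : ∀ ω, C ω = g (C' ω)) : CondIndep μ A B C' := by
  intro a b d
  by_cases hd : f (g d) = d
  · have key : ∀ ω, C' ω = d ↔ C ω = g d := fun ω =>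
      ⟨fun h => h ▸ hg ω, fun h => (hf ω).trans (h ▸ hd)⟩
    simp only [key]
    exact h a b (g d)
  · have key : ∀ ω, C' ω ≠ d := fun ω h => hd (by rw [← h, ← hg ω, hf ω])
    simp [key, pr]

theorem CondIndep.prod_cond {A : Ω → α} {B : Ω → β} {C : Ω → γ} (h : CondIndep μ A B C) :
    CondIndep μ A (fun ω => (B ω, C ω)) C := by
  rintro a ⟨b, c'⟩ c
  by_cases hc : c' = c
  · subst hc
    simp only [Prod.mk.injEq, and_assoc, and_self]
    exact h a b c'
  · have key : ∀ ω, ¬((B ω = b ∧ C ω = c') ∧ C ω = c) := fun ω h => hc (h.1.2.symm.trans h.2)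
    simp [key, pr]

theorem condIndep_comp_cond (A : Ω → α) (C : Ω → γ) (f : γ → β) :
    CondIndep μ A (fun ω => f (C ω)) C := by
  intro a b c
  by_cases hb : f c = b
  · have key : ∀ ω, (f (C ω) = b ∧ C ω = c) ↔ C ω = c := fun ω => ⟨And.right, fun h => ⟨h ▸ hb, h⟩⟩
    simp only [key]
  · have key : ∀ ω, ¬ (f (C ω) = b ∧ C ω = c) := fun ω h => hb (h.2 ▸ h.1)
    simp [key, pr]

theorem mul_eq_mul_of_cross {x y u v p q : ENNReal} (hp : p ≠ 0) (hp' : p ≠ ⊤)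
    (hx : x * p = q * v) (hu : u * p = q * y) : x * y = u * v := by
  refine (ENNReal.mul_left_inj hp hp').1 ?_
  calc x * y * p = x * p * y := by ring
    _ = u * p * v := by rw [hx, hu]; ring
    _ = u * v * p := by ring

theorem CondIndep.weak_union {A : Ω → α} {B : Ω → β} {C : Ω → γ} {W : Ω → δ}
    (h : CondIndep μ A (fun ω => (B ω, W ω)) C) : CondIndep μ A B (fun ω => (C ω, W ω)) := by
  rintro a b ⟨c, w⟩
  have hW := h.comp_right Prod.snd a w c
  have hBW := h a (b, w) c
  simp only [Prod.mk.injEq, and_comm, and_left_comm] at hW hBW ⊢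
  by_cases hc : pr μ {ω | C ω = c} = 0
  · have hCW : pr μ {ω | C ω = c ∧ W ω = w} = 0 := pr_eq_zero_of_imp hc fun _ h => h.1
    have hACW : pr μ {ω | A ω = a ∧ C ω = c ∧ W ω = w} = 0 :=
      pr_eq_zero_of_imp hc fun _ h => h.2.1
    rw [hCW, hACW, mul_zero, zero_mul]
  · exact mul_eq_mul_of_cross hc (pr_ne_top _) hBW hW

theorem CondIndep.contraction {A : Ω → α} {B : Ω → β} {C : Ω → γ} {N : Ω → δ}
    (hB : CondIndep μ A B C) (hN : CondIndep μ A N (fun ω => (C ω, B ω))) :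
    CondIndep μ A (fun ω => (B ω, N ω)) C := by
  rintro a ⟨b, n⟩ c
  have hB := hB a b c
  have hN := hN a n (c, b)
  simp only [Prod.mk.injEq, and_assoc, and_comm, and_left_comm] at hB hN ⊢
  by_cases hbc : pr μ {ω | B ω = b ∧ C ω = c} = 0
  · have hABCN : pr μ {ω | A ω = a ∧ B ω = b ∧ C ω = c ∧ N ω = n} = 0 :=
      pr_eq_zero_of_imp hbc fun _ h => ⟨h.2.1, h.2.2.1⟩
    have hBCN : pr μ {ω | B ω = b ∧ C ω = c ∧ N ω = n} = 0 :=
      pr_eq_zero_of_imp hbc fun _ h => ⟨h.1, h.2.1⟩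
    rw [hABCN, hBCN, mul_zero, zero_mul]
  · exact mul_eq_mul_of_cross hbc (pr_ne_top _) hN hB.symm

theorem indep_iff_condIndep_unit {A : Ω → α} {B : Ω → β} :
    Indep μ A B ↔ CondIndep μ A B (fun _ => ()) := by
  simp [CondIndep, Indep, pr_univ]

theorem Indep.symm {A : Ω → α} {B : Ω → β} (h : Indep μ A B) : Indep μ B A :=
  indep_iff_condIndep_unit.2 (indep_iff_condIndep_unit.1 h).symm

theorem Indep.comp_left {A : Ω → α} {B : Ω → β} (h : Indep μ A B) (f : α → δ) :
    Indep μ (fun ω => f (A ω)) B :=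
  indep_iff_condIndep_unit.2 ((indep_iff_condIndep_unit.1 h).comp_left f)

theorem Indep.comp_right {A : Ω → α} {B : Ω → β} (h : Indep μ A B) (f : β → δ) :
    Indep μ A (fun ω => f (B ω)) :=
  (h.symm.comp_left f).symm

theorem Indep.of_condIndep {C : Ω → γ} {N : Ω → δ} {O : Ω → β} (hC : Indep μ C O)
    (hN : CondIndep μ N O C) : Indep μ N O := by
  have hCN := (indep_iff_condIndep_unit.1 hC.symm).contraction
    (hN.symm.congr_cond (fun c => ((), c)) Prod.snd (fun _ => rfl) (fun _ => rfl))
  exact (indep_iff_condIndep_unit.2 (hCN.comp_right Prod.snd)).symm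

theorem Indep.congr_ae {A A' : Ω → α} {B B' : Ω → β} (h : Indep μ A B)
    (hA : ∀ ω ∈ μ.support, A' ω = A ω) (hB : ∀ ω ∈ μ.support, B' ω = B ω) :
    Indep μ A' B' := by
  intro a b
  have hAB : pr μ {ω | A' ω = a ∧ B' ω = b} = pr μ {ω | A ω = a ∧ B ω = b} :=
    pr_congr_ae fun ω hω => by rw [hA ω hω, hB ω hω]
  have hA' : pr μ {ω | A' ω = a} = pr μ {ω | A ω = a} := pr_congr_ae fun ω hω => by rw [hA ω hω]
  have hB' : pr μ {ω | B' ω = b} = pr μ {ω | B ω = b} := pr_congr_ae fun ω hω => by rw [hB ω hω]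
  rw [hAB, hA', hB']
  exact h a b

theorem MutIndepOn.of_ae_comp {ι : Type} {β γ : ι → Type} {V : ∀ i, Ω → β i}
    {W : ∀ i, Ω → γ i} {s : Finset ι} (h : MutIndepOn μ V s) (f : ∀ i, β i → γ i)
    (hf : ∀ i, ∀ ω ∈ μ.support, W i ω = f i (V i ω)) : MutIndepOn μ W s := fun i hi =>
  ((h i hi).comp_left (f i)).comp_right (fun v j => f j.1 (v j)) |>.congr_ae (hf i)
    fun ω hω => funext fun j => hf j.1 ω hω

theorem condIndep_trajectory_of_markov {U : Ω → β} {V : ℕ → Ω → α} {N : ℕ}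
    (hV : ∀ m < N,
      CondIndep μ (V (m + 1)) (fun ω => (U ω, fun j : Fin (m + 1) => V j ω)) (V m)) :
    CondIndep μ U (fun ω (j : Fin (N + 1)) => V j ω) (V 0) := by
  suffices ∀ m ≤ N, CondIndep μ U (fun ω (j : Fin (m + 1)) => V j ω) (V 0) from this N le_rfl
  intro m
  induction m with
  | zero =>
    intro _
    convert condIndep_comp_cond U (V 0) fun v (_ : Fin 1) => v using 1
    funext ω j
    rw [Fin.fin_one_eq_zero j]
    rfl
  | succ m ih =>
    intro hm
    have hstep : CondIndep μ U (V (m + 1)) (fun ω => (V 0 ω, fun j : Fin (m + 1) => V j ω)) :=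
      ((hV m hm).weak_union.congr_cond Prod.snd (fun p => (p (Fin.last m), p))
        (fun _ => rfl) (fun _ => rfl)).symm.congr_cond (fun p => (p ⟨0, m.succ_pos⟩, p))
        Prod.snd (fun _ => rfl) (fun _ => rfl)
    have hsnoc : (fun ω => Fin.snoc (α := fun _ => α) (fun j : Fin (m + 1) => V j ω) (V (m + 1) ω))
        = fun ω (j : Fin (m + 2)) => V j ω := by
      funext ω j
      induction j using Fin.lastCases <;> simp
    have h := ((ih (by omega)).contraction hstep).comp_right
      fun p => Fin.snoc (α := fun _ => α) p.1 p.2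
    beta_reduce at h
    rwa [hsnoc] at h

end Probability

section BayesianNetwork

variable {Ω ν α : Type} {μ : PMF Ω} {X : ν → Ω → α} {E : ν → ν → Prop}

theorem invariant_of_reflTransGen {R : ν → Prop} (hR : ∀ a c, R a → E a c → R c) {w v : ν}
    (h : ReflTransGen E w v) (hw : R w) : R v := by
  induction h with
  | refl => exact hw
  | tail _ hE ih => exact hR _ _ ih hE

theorem SatisfiesBN.condIndep_of_parent_eq (hX : SatisfiesBN μ X E) {w p : ν}
    (hp : ∀ v, E v w ↔ v = p) {ι : Type} (g : ι → ν) (hg : ∀ j, ¬ ReflTransGen E w (g j)) :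
    CondIndep μ (X w) (fun ω j => X (g j) ω) (X p) := by
  classical
  have h := (hX w).prod_cond.comp_right
    fun (q : (nonDescSet E w → α) × (parentSet E w → α)) j =>
      if hj : E (g j) w then q.2 ⟨g j, hj⟩ else q.1 ⟨g j, hg j, hj⟩
  simp only [dite_eq_ite, ite_self] at h
  refine h.congr_cond (fun q => q ⟨p, (hp p).2 rfl⟩) (fun x _ => x) (fun _ => rfl)
    fun ω => funext fun ⟨v, hv⟩ => ?_
  obtain rfl := (hp v).1 hv
  rfl

theorem SatisfiesBN.indep_of_forall_not (hX : SatisfiesBN μ X E) {w : ν}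
    (hw : ∀ v, ¬ E v w) {ι : Type} (g : ι → ν) (hg : ∀ j, ¬ ReflTransGen E w (g j)) :
    Indep μ (X w) (fun ω j => X (g j) ω) :=
  indep_iff_condIndep_unit.2 <|
    ((hX w).comp_right fun q j => q ⟨g j, hg j, hw _⟩).congr_cond (fun _ => ())
      (fun _ v => (hw v.1 v.2).elim) (fun _ => rfl) fun _ => funext fun v => (hw v.1 v.2).elim

end BayesianNetwork

namespace BNode

variable {n k : ℕ}

def idx : BNode n k → Fin n
  | u i | y i | z i | x i _ => i

/-- Position on the chain `U_i → Y_i → X_i^1 → ⋯ → X_i^k → Z_i` of Network 1; the paper's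
`X_i^j` is `x i (j - 1)`. -/
def pos : BNode n k → ℕ
  | u _ => 0
  | y _ => 1
  | x _ j => j + 2
  | z _ => k + 2

/-- `chain i 0, …, chain i (k + 1)` are `Y_i, X_i^1, …, X_i^k, Z_i`. -/
def chain (i : Fin n) : ℕ → BNode n k
  | 0 => y i
  | m + 1 => if h : m < k then x i ⟨m, h⟩ else z i

theorem pos_chain (i : Fin n) {m : ℕ} (hm : m ≤ k + 1) : (chain (k := k) i m).pos = m + 1 := by
  rcases m with _ | m
  · rfl
  · by_cases h : m < k
    · simp [chain, pos, h]
    · simp [chain, pos, h]; omega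

end BNode

open BNode

section Network1

variable {n k : ℕ} {C1 : Finset (Fin n)}

theorem edge1_idx_pos {a c : BNode n k} (h : edge1 n k C1 a c) (ha : a.pos ≠ 0) :
    c.idx = a.idx ∧ a.pos < c.pos := by
  cases a <;> cases c <;> simp_all [edge1, idx, pos]
  omega

theorem idx_pos_of_reflTransGen_edge1 {w v : BNode n k} (h : ReflTransGen (edge1 n k C1) w v)
    (hw : w.pos ≠ 0) : v.idx = w.idx ∧ w.pos ≤ v.pos :=
  invariant_of_reflTransGen (R := fun v => v.idx = w.idx ∧ w.pos ≤ v.pos)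
    (fun _ _ ha hac => have h' := edge1_idx_pos hac (by omega); ⟨h'.1.trans ha.1, by omega⟩)
    h ⟨rfl, le_rfl⟩

theorem edge1_idx {a c : BNode n k} (h : edge1 n k C1 a c) : c.idx = a.idx ∨ c.idx ∉ C1 := by
  cases a <;> cases c <;> simp_all [edge1, idx]
  tauto

theorem idx_of_reflTransGen_edge1_u {i : Fin n} {v : BNode n k}
    (h : ReflTransGen (edge1 n k C1) (u i) v) : v.idx = i ∨ v.idx ∉ C1 :=
  invariant_of_reflTransGen (R := fun v => v.idx = i ∨ v.idx ∉ C1)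
    (fun _ _ ha hac => (edge1_idx hac).elim (fun h => h ▸ ha) Or.inr) h (Or.inl rfl)

theorem not_reflTransGen_edge1_of_pos_lt {w v : BNode n k} (h : v.pos < w.pos) :
    ¬ ReflTransGen (edge1 n k C1) w v :=
  fun hr => absurd (idx_pos_of_reflTransGen_edge1 hr (by omega)).2 (by omega)

theorem not_reflTransGen_edge1_of_idx_ne {w v : BNode n k} (hw : w.pos ≠ 0) (h : v.idx ≠ w.idx) :
    ¬ ReflTransGen (edge1 n k C1) w v :=
  fun hr => h (idx_pos_of_reflTransGen_edge1 hr hw).1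

theorem not_edge1_u {i : Fin n} (hi : i ∈ C1) (v : BNode n k) : ¬ edge1 n k C1 v (u i) := by
  cases v <;> simp_all [edge1]

theorem edge1_y_iff (i : Fin n) (v : BNode n k) : edge1 n k C1 v (y i) ↔ v = u i := by
  cases v <;> simp [edge1, eq_comm]

theorem edge1_chain_iff (hk : 1 ≤ k) (i : Fin n) {m : ℕ} (hm : m ≤ k) (v : BNode n k) :
    edge1 n k C1 v (chain i (m + 1)) ↔ v = chain i m := by
  rcases m with _ | m
  · cases v <;> simp [edge1, chain, show 0 < k by omega, eq_comm]
  · have hmk : m < k := by omega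
    by_cases h : m + 1 < k <;> cases v <;> simp [edge1, chain, h, hmk, eq_comm, Fin.ext_iff]
    omega

end Network1

section Network2

variable {n k : ℕ} {C2 : Finset (Fin n)} {A : Fin k → Finset (Fin n)} {b : Fin k → Fin n}

theorem idx_of_reflTransGen_edge2_u {i j : Fin n}
    (h : ReflTransGen (edge2 n k C2 A b) (u i) (y j)) : j = i ∨ j ∉ C2 :=
  -- the edges `X_i^j → X_{b_j}^j` reach any index, but no edge leads from an `X`-node to a `Y`-node
  invariant_of_reflTransGen (R := fun | x _ _ => True | v => v.idx = i ∨ v.idx ∉ C2)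
    (by rintro (_ | _ | _ | _) (_ | _ | _ | _) <;> simp [edge2, idx] <;> grind) h (Or.inl rfl)

theorem eq_of_reflTransGen_edge2_z {i : Fin n} {w v : BNode n k} (hw : w = z i ∨ w = y i)
    (h : ReflTransGen (edge2 n k C2 A b) w v) : v = z i ∨ v = y i :=
  invariant_of_reflTransGen (R := fun v => v = z i ∨ v = y i)
    (by rintro _ (_ | _ | _ | _) (rfl | rfl) <;> simp [edge2, eq_comm]) h hw

theorem not_edge2_u {i : Fin n} (hi : i ∈ C2) (v : BNode n k) : ¬ edge2 n k C2 A b v (u i) := by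
  cases v <;> simp_all [edge2]

theorem edge2_z_iff (i : Fin n) (v : BNode n k) : edge2 n k C2 A b v (z i) ↔ v = u i := by
  cases v <;> simp [edge2, eq_comm]

theorem edge2_y_iff (i : Fin n) (v : BNode n k) : edge2 n k C2 A b v (y i) ↔ v = z i := by
  cases v <;> simp [edge2, eq_comm]

end Network2

section Networks

variable {n k : ℕ} {Ω : Type} {μ : PMF Ω} {X : BNode n k → Ω → ℕ}

theorem suffStat_y_of_edge1 (hk : 1 ≤ k) {C1 : Finset (Fin n)}
    (h1 : SatisfiesBN μ X (edge1 n k C1)) (i : Fin n) :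
    SuffStat μ (tupleVar X i) (Ujoint X) (X (y i)) := by
  refine ⟨⟨fun t => t.2.1, fun _ _ => rfl⟩, ?_⟩
  have htraj := condIndep_trajectory_of_markov (U := Ujoint X) (V := fun m => X (chain i m))
    (N := k + 1) fun m hm => by
      have hw : (chain (k := k) i (m + 1)).pos = m + 2 := pos_chain i (by omega)
      have hg : ∀ j : Fin n ⊕ Fin (m + 1), ¬ ReflTransGen (edge1 n k C1) (chain i (m + 1))
          (Sum.elim u (fun j : Fin (m + 1) => chain i j) j) := by
        rintro (j | j) <;> refine not_reflTransGen_edge1_of_pos_lt ?_ <;> rw [hw]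
        · simp [pos]
        · rw [Sum.elim_inr, pos_chain i (by omega)]
          omega
      exact (h1.condIndep_of_parent_eq (edge1_chain_iff hk i (by omega)) _ hg).comp_right
        fun q => (fun i' => q (.inl i'), fun j => q (.inr j))
  have h := htraj.comp_right fun p => ((fun j : Fin k => p j.succ.castSucc), p 0, p (Fin.last _))
  convert h using 2
  · simp [tupleVar, chain]
  · rfl

theorem mutIndepOn_y_of_edge1 {C1 : Finset (Fin n)} (h1 : SatisfiesBN μ X (edge1 n k C1)) :
    MutIndepOn μ (fun i => X (y i)) C1 := by
  intro i hi
  let g : {j // j ∈ C1 ∧ j ≠ i} → BNode n k := fun j => y j.1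
  have hU : Indep μ (X (u i)) (fun ω j => X (g j) ω) :=
    h1.indep_of_forall_not (not_edge1_u hi) g fun j hj =>
      (idx_of_reflTransGen_edge1_u hj).elim j.2.2 fun h => h j.2.1
  have hY : CondIndep μ (X (y i)) (fun ω j => X (g j) ω) (X (u i)) :=
    h1.condIndep_of_parent_eq (edge1_y_iff i) g fun j =>
      not_reflTransGen_edge1_of_idx_ne (by simp [pos]) (by simpa [idx] using j.2.2)
  exact hU.of_condIndep hY

theorem mutIndepOn_y_of_edge2 {C2 : Finset (Fin n)} {A : Fin k → Finset (Fin n)}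
    {b : Fin k → Fin n} (h2 : SatisfiesBN μ X (edge2 n k C2 A b)) :
    MutIndepOn μ (fun i => X (y i)) C2 := by
  intro i hi
  let g : {j // j ∈ C2 ∧ j ≠ i} → BNode n k := fun j => y j.1
  have hg : ∀ (w : BNode n k), (w = z i ∨ w = y i) →
      ∀ j, ¬ ReflTransGen (edge2 n k C2 A b) w (g j) := fun w hw j hj => by
    rcases eq_of_reflTransGen_edge2_z hw hj with h | h <;> simp [g] at h
    exact j.2.2 h
  have hU : Indep μ (X (u i)) (fun ω j => X (g j) ω) :=
    h2.indep_of_forall_not (not_edge2_u hi) g fun j hj =>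
      (idx_of_reflTransGen_edge2_u hj).elim j.2.2 fun h => h j.2.1
  have hZ : CondIndep μ (X (z i)) (fun ω j => X (g j) ω) (X (u i)) :=
    h2.condIndep_of_parent_eq (edge2_z_iff i) g (hg _ (Or.inl rfl))
  have hY : CondIndep μ (X (y i)) (fun ω j => X (g j) ω) (X (z i)) :=
    h2.condIndep_of_parent_eq (edge2_y_iff i) g (hg _ (Or.inr rfl))
  exact (hU.of_condIndep hZ).of_condIndep hY

end Networks

theorem networks_mutIndep_general (n k : ℕ) (hk : 1 ≤ k)
    (C1 C2 : Finset (Fin n))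
    (A : Fin k → Finset (Fin n)) (b : Fin k → Fin n)
    (Ω : Type) (μ : PMF Ω) (X : BNode n k → Ω → ℕ)
    (h1 : SatisfiesBN μ X (edge1 n k C1))
    (h2 : SatisfiesBN μ X (edge2 n k C2 A b))
    (β : Fin n → Type) (T : ∀ i, Ω → β i)
    (hT : ∀ i, MinSuffStat μ (tupleVar X i) (Ujoint X) (T i)) :
    MutIndepOn μ T C1 ∧ MutIndepOn μ T C2 := by
  have hY : ∀ i, FunDep μ (X (y i)) (T i) := fun i => (hT i).2 ℕ _ (suffStat_y_of_edge1 hk h1 i)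
  choose f hf using hY
  exact ⟨(mutIndepOn_y_of_edge1 h1).of_ae_comp f hf, (mutIndepOn_y_of_edge2 h2).of_ae_comp f hf⟩

/-- Lemma 7 of the paper: Networks 1 and 2 imply that `(T_i)_{i ∈ C1}` are mutually
independent and `(T_i)_{i ∈ C2}` are mutually independent, where
`T_i = S((X_i^1,…,X_i^k,Y_i,Z_i); U)`. -/
theorem networks_mutIndep (n k : ℕ) (hn : 2 ≤ n) (hk : 1 ≤ k)
    (C1 C2 : Finset (Fin n)) (hC : Disjoint C1 C2)
    (A : Fin k → Finset (Fin n)) (b : Fin k → Fin n) (hb : ∀ j, b j ∉ A j)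
    (Ω : Type) (μ : PMF Ω) (X : BNode n k → Ω → ℕ)
    (hfin : ∀ v, FinSupp μ (X v))
    (h1 : SatisfiesBN μ X (edge1 n k C1))
    (h2 : SatisfiesBN μ X (edge2 n k C2 A b))
    (β : Fin n → Type) (T : ∀ i, Ω → β i)
    (hT : ∀ i, MinSuffStat μ (tupleVar X i) (Ujoint X) (T i)) :
    MutIndepOn μ T C1 ∧ MutIndepOn μ T C2 :=
  networks_mutIndep_general n k hk C1 C2 A b Ω μ X h1 h2 β T hT

end Paper
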